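/- arXiv:2205.00430 — 3 statements merged into one kernel-verified Lean document; each statement's English description precedes it below -/
import Mathlib

section
/- The Hopf fibration f : S³ → S² induces a homeomorphism from the orbit space S³/S¹, equipped with the quotient topology, onto the unit 2-sphere S² with its subspace topology. -/
/-!
The Hopf map is a continuous map from the compact space `S³` onto the Hausdorff space `S²`,
so it suffices that its fibres are exactly the circle orbits. Since
`|2zw̄|² + (|z|² − |w|²)² = (|z|² + |w|²)²`, the value `hopf (z, w)` determines `|z|` and `|w|`,
hence `(z', w') = (λz, μw)` with `|λ| = |μ| = 1`; equality of `z w̄` then forces `λ = μ`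
when `zw ≠ 0`, and otherwise one of the two phases is irrelevant.
-/

open Complex

/-- The unit 3-sphere in `ℂ²`. -/
def S3 : Set (ℂ × ℂ) := {p | ‖p.1‖ ^ 2 + ‖p.2‖ ^ 2 = 1}

/-- The unit 2-sphere in `ℂ × ℝ`. -/
def S2 : Set (ℂ × ℝ) := {p | ‖p.1‖ ^ 2 + p.2 ^ 2 = 1}

/-- The Hopf fibration `f(z,w) = (2 z w̄, |z|² − |w|²)`. -/
noncomputable def hopf (p : ℂ × ℂ) : ℂ × ℝ :=
  (2 * p.1 * (starRingEnd ℂ) p.2, ‖p.1‖ ^ 2 - ‖p.2‖ ^ 2)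

/-- Two points of `S³` are related iff they lie in the same orbit of the diagonal
action of the circle group `S¹` by complex multiplication. -/
def circleRel (p p' : S3) : Prop :=
  ∃ lam : ℂ, ‖lam‖ = 1 ∧
    (p' : ℂ × ℂ) = (lam * (p : ℂ × ℂ).1, lam * (p : ℂ × ℂ).2)

lemma norm_sq_hopf_fst_add_sq_hopf_snd (p : ℂ × ℂ) :
    ‖(hopf p).1‖ ^ 2 + (hopf p).2 ^ 2 = (‖p.1‖ ^ 2 + ‖p.2‖ ^ 2) ^ 2 := by
  simp only [hopf, norm_mul, Complex.norm_conj, Complex.norm_two]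
  ring

lemma hopf_mapsTo : Set.MapsTo hopf S3 S2 := fun p (hp : _ = _) =>
  show _ = _ by rw [norm_sq_hopf_fst_add_sq_hopf_snd, hp, one_pow]

lemma continuous_hopf : Continuous hopf := by
  unfold hopf
  fun_prop

lemma Complex.mul_conj_eq_one {lam : ℂ} (hlam : ‖lam‖ = 1) : lam * starRingEnd ℂ lam = 1 := by
  rw [Complex.mul_conj', hlam, Complex.ofReal_one, one_pow]

lemma hopf_unit_mul {lam : ℂ} (hlam : ‖lam‖ = 1) (p : ℂ × ℂ) :
    hopf (lam * p.1, lam * p.2) = hopf p := by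
  simp only [hopf, map_mul, norm_mul, hlam, one_mul, Prod.mk.injEq, and_true]
  linear_combination 2 * p.1 * starRingEnd ℂ p.2 * Complex.mul_conj_eq_one hlam

lemma Complex.exists_norm_eq_one_mul_eq {a b : ℂ} (h : ‖a‖ = ‖b‖) :
    ∃ lam : ℂ, ‖lam‖ = 1 ∧ b = lam * a := by
  rcases eq_or_ne a 0 with rfl | ha
  · exact ⟨1, norm_one, by simpa using h.symm⟩
  · refine ⟨b / a, ?_, (div_mul_cancel₀ b ha).symm⟩
    rw [norm_div, ← h, div_self (norm_ne_zero_iff.mpr ha)]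

lemma norm_eq_of_hopf_eq {p p' : ℂ × ℂ} (h : hopf p = hopf p') :
    ‖p.1‖ = ‖p'.1‖ ∧ ‖p.2‖ = ‖p'.2‖ := by
  have hsum : ‖p.1‖ ^ 2 + ‖p.2‖ ^ 2 = ‖p'.1‖ ^ 2 + ‖p'.2‖ ^ 2 := by
    have := norm_sq_hopf_fst_add_sq_hopf_snd p
    rw [h, norm_sq_hopf_fst_add_sq_hopf_snd] at this
    exact (pow_left_inj₀ (by positivity) (by positivity) two_ne_zero).mp this.symm
  have hdiff := congrArg Prod.snd h
  simp only [hopf] at hdiff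
  constructor <;>
    refine (pow_left_inj₀ (norm_nonneg _) (norm_nonneg _) two_ne_zero).mp ?_ <;>
    linarith

lemma hopf_eq_hopf_iff {p p' : ℂ × ℂ} :
    hopf p = hopf p' ↔ ∃ lam : ℂ, ‖lam‖ = 1 ∧ p' = (lam * p.1, lam * p.2) := by
  refine ⟨fun h => ?_, fun ⟨_, hlam, h⟩ => by rw [h, hopf_unit_mul hlam]⟩
  obtain ⟨z, w⟩ := p
  obtain ⟨z', w'⟩ := p'
  obtain ⟨hz, hw⟩ := norm_eq_of_hopf_eq h
  rcases eq_or_ne z 0 with rfl | hz0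
  · obtain ⟨lam, hlam, rfl⟩ := Complex.exists_norm_eq_one_mul_eq hw
    have : z' = 0 := norm_eq_zero.mp (by simpa using hz.symm)
    exact ⟨lam, hlam, by simp [this]⟩
  obtain ⟨lam, hlam, rfl⟩ := Complex.exists_norm_eq_one_mul_eq hz
  refine ⟨lam, hlam, Prod.ext rfl ?_⟩
  have hmixed : 2 * starRingEnd ℂ z * w = 2 * (starRingEnd ℂ lam * starRingEnd ℂ z) * w' := by
    simpa [hopf, map_ofNat] using congrArg (fun q => starRingEnd ℂ q.1) h
  have hcancel : starRingEnd ℂ z * (w' - lam * w) = 0 := by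
    linear_combination -lam / 2 * hmixed - starRingEnd ℂ z * w' * Complex.mul_conj_eq_one hlam
  show w' = lam * w
  exact sub_eq_zero.mp ((mul_eq_zero.mp hcancel).resolve_left (by simpa using hz0))

lemma hopf_surjOn : Set.SurjOn hopf S3 S2 := by
  rintro ⟨a, x⟩ (hax : ‖a‖ ^ 2 + x ^ 2 = 1)
  rcases eq_or_ne x (-1) with rfl | hx
  · have ha : a = 0 := by simpa using hax
    exact ⟨(0, 1), by simp [S3], by simp [hopf, ha]⟩
  have hx' : 0 < 1 + x := by
    linarith [lt_of_le_of_ne (show -1 ≤ x by nlinarith [norm_nonneg a]) hx.symm]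
  -- away from the south pole, `(r, ā / (2r))` with `r = √((1 + x) / 2)` is a preimage
  set r := √((1 + x) / 2)
  have hr : 0 < r := Real.sqrt_pos.mpr (by positivity)
  have hr2 : r ^ 2 = (1 + x) / 2 := Real.sq_sqrt (by positivity)
  have hw : ‖starRingEnd ℂ a / (2 * r)‖ ^ 2 = (1 - x) / 2 := by
    rw [norm_div, norm_mul, Complex.norm_conj, Complex.norm_two, Complex.norm_real,
      Real.norm_of_nonneg hr.le, div_pow, mul_pow, hr2]
    field_simp
    nlinarith
  refine ⟨((r : ℂ), starRingEnd ℂ a / (2 * r)), ?_, ?_⟩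
  · show _ = _
    rw [hw, Complex.norm_real, Real.norm_of_nonneg hr.le, hr2]
    ring
  · have hr0 : (r : ℂ) ≠ 0 := Complex.ofReal_ne_zero.mpr hr.ne'
    refine Prod.ext ?_ ?_
    · simp only [hopf, map_div₀, map_mul, Complex.conj_conj, Complex.conj_ofReal, map_ofNat]
      field_simp
    · rw [hopf, hw, Complex.norm_real, Real.norm_of_nonneg hr.le, hr2]
      ring

lemma isCompact_S3 : IsCompact S3 := by
  refine (isCompact_closedBall (0 : ℂ × ℂ) 1).of_isClosed_subset
    (isClosed_eq (by fun_prop) continuous_const) fun p (hp : _ = _) => ?_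
  rw [Metric.mem_closedBall, dist_zero_right, Prod.norm_def, max_le_iff]
  constructor <;> nlinarith [norm_nonneg p.1, norm_nonneg p.2]

instance : CompactSpace S3 := isCompact_iff_compactSpace.mp isCompact_S3

noncomputable def hopfOrbitMap : Quot circleRel → S2 :=
  Quot.lift (hopf_mapsTo.restrict hopf S3 S2) fun _ _ h =>
    Subtype.ext (hopf_eq_hopf_iff.mpr h)

lemma continuous_hopfOrbitMap : Continuous hopfOrbitMap :=
  continuous_quot_lift _ (continuous_hopf.restrict hopf_mapsTo)

lemma bijective_hopfOrbitMap : Function.Bijective hopfOrbitMap := by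
  refine ⟨?_, fun y => ?_⟩
  · rintro ⟨p⟩ ⟨p'⟩ h
    exact Quot.sound (hopf_eq_hopf_iff.mp (congrArg Subtype.val h))
  · obtain ⟨p, hp, hpy⟩ := hopf_surjOn y.2
    exact ⟨Quot.mk _ ⟨p, hp⟩, Subtype.ext hpy⟩

/-- The Hopf fibration induces a homeomorphism from the orbit space `S³/S¹`, with the
quotient topology, onto the unit 2-sphere `S²` with its subspace topology. -/
theorem hopf_induces_homeomorph_orbitSpace_sphere :
    ∃ h : Quot circleRel ≃ₜ S2,
      ∀ p : S3, ((h (Quot.mk circleRel p) : ℂ × ℝ)) = hopf (p : ℂ × ℂ) :=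
  ⟨continuous_hopfOrbitMap.homeoOfEquivCompactToT2
    (f := Equiv.ofBijective _ bijective_hopfOrbitMap), fun _ => rfl⟩
end

section
/- The regular pentagon is not a rational polytope: identifying ℝ² with ℂ, there do not exist a basis (v₁, v₂) of ℝ² and nonzero real numbers c₀, c₁, c₂, c₃, c₄ such that c_k·e^{2πik/5} belongs to the lattice ℤv₁ + ℤv₂ for every k = 0, 1, 2, 3, 4. Equivalently, no lattice in ℝ² contains a nonzero real multiple of each of the five inward normals of the regular pentagon, which point in the directions of the fifth roots of unity. -/
open Complex

lemma pentagon_aux (c t : ℝ) (v₁ v₂ : ℂ) (m n : ℤ)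
    (e : (c : ℂ) * Complex.exp ((t : ℂ) * Complex.I) = (m : ℂ) * v₁ + (n : ℂ) * v₂) :
    c * Real.cos t = m * v₁.re + n * v₂.re ∧ c * Real.sin t = m * v₁.im + n * v₂.im := by
  rw [Complex.exp_mul_I, ← Complex.ofReal_cos, ← Complex.ofReal_sin] at e
  constructor
  · have := congrArg Complex.re e
    simp only [Complex.add_re, Complex.add_im, Complex.mul_re, Complex.mul_im,
      Complex.ofReal_re, Complex.ofReal_im, Complex.I_re, Complex.I_im,
      Complex.intCast_re, Complex.intCast_im] at this
    linarith [this]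
  · have := congrArg Complex.im e
    simp only [Complex.add_re, Complex.add_im, Complex.mul_re, Complex.mul_im,
      Complex.ofReal_re, Complex.ofReal_im, Complex.I_re, Complex.I_im,
      Complex.intCast_re, Complex.intCast_im] at this
    linarith [this]

/-- The regular pentagon is not rational: identifying `ℝ²` with `ℂ`, there is no basis
`(v₁, v₂)` of `ℝ²` and nonzero reals `c₀, …, c₄` such that `cₖ·e^{2πik/5}` lies in the
lattice `ℤv₁ + ℤv₂` for every `k`. -/
theorem pentagon_not_rational :
    ¬ ∃ (v₁ v₂ : ℂ) (c : Fin 5 → ℝ),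
        LinearIndependent ℝ ![v₁, v₂] ∧
        ∀ k : Fin 5, c k ≠ 0 ∧
          ∃ m n : ℤ,
            (c k : ℂ) * Complex.exp (2 * Real.pi * Complex.I * (k : ℕ) / 5) =
              (m : ℂ) * v₁ + (n : ℂ) * v₂ := by
  rintro ⟨v₁, v₂, c, -, h⟩
  obtain ⟨hc0, m0, n0, e0⟩ := h 0
  obtain ⟨hc1, m1, n1, e1⟩ := h 1
  obtain ⟨hc2, m2, n2, e2⟩ := h 2
  obtain ⟨hc3, m3, n3, e3⟩ := h 3
  -- rewrite exponents
  rw [show 2 * (Real.pi:ℂ) * Complex.I * (((0:Fin 5):ℕ):ℂ) / 5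
      = ((0 : ℝ) : ℂ) * Complex.I by
        rw [show ((0:Fin 5):ℕ) = 0 from rfl]; push_cast; ring] at e0
  rw [show 2 * (Real.pi:ℂ) * Complex.I * (((1:Fin 5):ℕ):ℂ) / 5
      = ((2*Real.pi/5 : ℝ) : ℂ) * Complex.I by
        rw [show ((1:Fin 5):ℕ) = 1 from rfl]; push_cast; ring] at e1
  rw [show 2 * (Real.pi:ℂ) * Complex.I * (((2:Fin 5):ℕ):ℂ) / 5
      = ((2*(2*Real.pi/5) : ℝ) : ℂ) * Complex.I by
        rw [show ((2:Fin 5):ℕ) = 2 from rfl]; push_cast; ring] at e2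
  rw [show 2 * (Real.pi:ℂ) * Complex.I * (((3:Fin 5):ℕ):ℂ) / 5
      = ((3*(2*Real.pi/5) : ℝ) : ℂ) * Complex.I by
        rw [show ((3:Fin 5):ℕ) = 3 from rfl]; push_cast; ring] at e3
  obtain ⟨h0r, h0i⟩ := pentagon_aux _ _ _ _ _ _ e0
  obtain ⟨h1r, h1i⟩ := pentagon_aux _ _ _ _ _ _ e1
  obtain ⟨h2r, h2i⟩ := pentagon_aux _ _ _ _ _ _ e2
  obtain ⟨h3r, h3i⟩ := pentagon_aux _ _ _ _ _ _ e3
  rw [Real.cos_zero] at h0r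
  rw [Real.sin_zero] at h0i
  rw [Real.cos_two_mul] at h2r
  rw [Real.sin_two_mul] at h2i
  rw [Real.cos_three_mul] at h3r
  rw [Real.sin_three_mul] at h3i
  set s := Real.sin (2*Real.pi/5) with hs_def
  set cc := Real.cos (2*Real.pi/5) with hcc_def
  set x1 := v₁.re; set y1 := v₁.im; set x2 := v₂.re; set y2 := v₂.im
  have hpi := Real.pi_pos
  have hs : s ≠ 0 := by
    have : 0 < s := Real.sin_pos_of_pos_of_lt_pi (by positivity) (by linarith)
    linarith
  have hpyth : s^2 + cc^2 = 1 := Real.sin_sq_add_cos_sq _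
  have hcc : cc = (Real.sqrt 5 - 1) / 4 := by
    have h5 : Real.sqrt 5 ^ 2 = 5 := Real.sq_sqrt (by norm_num)
    have hp5 : Real.cos (Real.pi/5) = (1 + Real.sqrt 5)/4 := Real.cos_pi_div_five
    have : cc = 2 * Real.cos (Real.pi/5)^2 - 1 := by
      rw [hcc_def, show 2*Real.pi/5 = 2*(Real.pi/5) by ring, Real.cos_two_mul]
    rw [this, hp5]; linear_combination h5 / 8
  -- determinant nonzero
  have hD : (m0:ℝ) * n1 - m1 * n0 ≠ 0 := by
    intro hD0
    have hn0 : (n0:ℝ) * (c 1 * s) = 0 := by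
      linear_combination (n0:ℝ) * h1i - (n1:ℝ) * h0i - y1 * hD0
    have hm0 : (m0:ℝ) * (c 1 * s) = 0 := by
      linear_combination (m0:ℝ) * h1i - (m1:ℝ) * h0i + y2 * hD0
    have hcs : c 1 * s ≠ 0 := mul_ne_zero hc1 hs
    have hn0' : (n0:ℝ) = 0 := by
      rcases mul_eq_zero.1 hn0 with h' | h'
      · exact h'
      · exact absurd h' hcs
    have hm0' : (m0:ℝ) = 0 := by
      rcases mul_eq_zero.1 hm0 with h' | h'
      · exact h'
      · exact absurd h' hcs
    apply hc0
    linear_combination h0r + x1 * hm0' + x2 * hn0'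
  set D : ℝ := (m0:ℝ) * n1 - m1 * n0 with hD_def
  set A : ℝ := (m2:ℝ) * n1 - n2 * m1 with hA_def
  set B : ℝ := (n2:ℝ) * m0 - m2 * n0 with hB_def
  set A' : ℝ := (m3:ℝ) * n1 - n3 * m1 with hA'_def
  set B' : ℝ := (n3:ℝ) * m0 - m3 * n0 with hB'_def
  -- the four key scalar relations
  have hB1 : B * c 1 = 2 * D * c 2 * cc := by
    apply mul_right_cancel₀ hs
    linear_combination A * h0i + B * h1i - D * h2i
  have hA1 : A * c 0 = -(D * c 2) := by
    linear_combination A * h0r + B * h1r - D * h2r - cc * hB1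
  have hB2 : B' * c 1 = D * c 3 * (4 * cc^2 - 1) := by
    apply mul_right_cancel₀ hs
    linear_combination A' * h0i + B' * h1i - D * h3i - 4 * D * c 3 * s * hpyth
  have hA2 : A' * c 0 = -(2 * D * c 3 * cc) := by
    linear_combination A' * h0r + B' * h1r - D * h3r - cc * hB2
  -- combine
  have p1 : (A' * c 0) * (B * c 1) = (-(2 * D * c 3 * cc)) * (2 * D * c 2 * cc) := by
    rw [hA2, hB1]
  have p2 : (A * c 0) * (B' * c 1) = (-(D * c 2)) * (D * c 3 * (4 * cc^2 - 1)) := by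
    rw [hA1, hB2]
  have hz : (A' * B - A * B') * (c 0 * c 1) = -(D^2 * (c 2 * c 3)) := by
    linear_combination p1 - p2
  have hw : (A' * B - 3 * (A * B')) * (c 0 * c 1) = D^2 * (c 2 * c 3) * (8 * cc^2 - 3) := by
    linear_combination p1 - 3 * p2
  have h8 : 8 * cc^2 - 3 = -Real.sqrt 5 := by
    have h5 : Real.sqrt 5 ^ 2 = 5 := Real.sq_sqrt (by norm_num)
    rw [hcc]; linear_combination h5 / 2
  rw [h8] at hw
  have hDc : -(D^2 * (c 2 * c 3)) ≠ 0 := by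
    simp only [neg_ne_zero]
    exact mul_ne_zero (pow_ne_zero _ hD) (mul_ne_zero hc2 hc3)
  have hc01 : c 0 * c 1 ≠ 0 := mul_ne_zero hc0 hc1
  have hzne : A' * B - A * B' ≠ 0 := by
    intro h0
    rw [h0, zero_mul] at hz
    exact hDc hz.symm
  have hkey : Real.sqrt 5 * (A' * B - A * B') = A' * B - 3 * (A * B') := by
    apply mul_right_cancel₀ hc01
    linear_combination Real.sqrt 5 * hz - hw
  -- integer versions
  set zZ : ℤ := (m3*n1 - n3*m1) * (n2*m0 - m2*n0) - (m2*n1 - n2*m1) * (n3*m0 - m3*n0) with hzZ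
  set wZ : ℤ := (m3*n1 - n3*m1) * (n2*m0 - m2*n0) - 3 * ((m2*n1 - n2*m1) * (n3*m0 - m3*n0)) with hwZ
  have hzcast : (zZ : ℝ) = A' * B - A * B' := by
    rw [hzZ, hA_def, hB_def, hA'_def, hB'_def]; push_cast; ring
  have hwcast : (wZ : ℝ) = A' * B - 3 * (A * B') := by
    rw [hwZ, hA_def, hB_def, hA'_def, hB'_def]; push_cast; ring
  have hzZne : (zZ : ℝ) ≠ 0 := by rw [hzcast]; exact hzne
  have hirr : Irrational (Real.sqrt 5) := by
    have := Nat.Prime.irrational_sqrt (show Nat.Prime 5 by norm_num)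
    simpa using this
  refine hirr ⟨(wZ : ℚ) / (zZ : ℚ), ?_⟩
  push_cast
  rw [div_eq_iff hzZne, hzcast, hwcast]
  linarith [hkey]
end

section
/- The Penrose kite is not a rational polytope: identifying ℝ² with ℂ, there do not exist a basis (v₁, v₂) of ℝ² and nonzero real numbers c₀, c₁, c₂, c₃ such that c_j·e^{3πij/5} belongs to the lattice ℤv₁ + ℤv₂ for every j = 0, 1, 2, 3. Equivalently, no lattice in ℝ² contains a nonzero real multiple of each of the four inward normals of the kite, which point in the directions e^{3πij/5}, j = 0, 1, 2, 3 (i.e. at angles 0°, 108°, 216°, 324°), each of which is, up to sign, a fifth root of unity. -/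
open Complex

private lemma kite_coords {c θ : ℝ} {m n : ℤ} {v₁ v₂ : ℂ}
    (h : (c : ℂ) * Complex.exp ((θ : ℂ) * Complex.I) = (m : ℂ) * v₁ + (n : ℂ) * v₂) :
    c * Real.cos θ = (m : ℝ) * v₁.re + (n : ℝ) * v₂.re ∧
      c * Real.sin θ = (m : ℝ) * v₁.im + (n : ℝ) * v₂.im := by
  constructor
  · have := congrArg Complex.re h
    simpa [Complex.mul_re, Complex.add_re, Complex.exp_ofReal_mul_I_re,
      Complex.exp_ofReal_mul_I_im] using this
  · have := congrArg Complex.im h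
    simpa [Complex.mul_im, Complex.add_im, Complex.exp_ofReal_mul_I_re,
      Complex.exp_ofReal_mul_I_im] using this

private lemma kite_det {c d θ ψ : ℝ} {p q r s v1re v1im v2re v2im : ℝ}
    (hA : c * Real.cos θ = p * v1re + q * v2re)
    (hB : c * Real.sin θ = p * v1im + q * v2im)
    (hC : d * Real.cos ψ = r * v1re + s * v2re)
    (hD : d * Real.sin ψ = r * v1im + s * v2im) :
    c * d * Real.sin (ψ - θ) = (p * s - q * r) * (v1re * v2im - v1im * v2re) := by
  rw [Real.sin_sub]
  linear_combination (d * Real.sin ψ) * hA + (p * v1re + q * v2re) * hD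
    - (d * Real.cos ψ) * hB - (p * v1im + q * v2im) * hC

set_option maxHeartbeats 1000000 in
/-- The Penrose kite is not rational: identifying `ℝ²` with `ℂ`, there is no basis
`(v₁, v₂)` of `ℝ²` and nonzero reals `c₀, …, c₃` such that `cⱼ·e^{3πij/5}` lies in the
lattice `ℤv₁ + ℤv₂` for every `j` (the directions `e^{3πij/5}`, `j = 0, 1, 2, 3`, are the
inward normals of the kite, each of which is, up to sign, a fifth root of unity). -/
theorem kite_not_rational :
    ¬ ∃ (v₁ v₂ : ℂ) (c : Fin 4 → ℝ),
        LinearIndependent ℝ ![v₁, v₂] ∧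
        ∀ j : Fin 4, c j ≠ 0 ∧
          ∃ m n : ℤ,
            (c j : ℂ) * Complex.exp (3 * Real.pi * Complex.I * (j : ℕ) / 5) =
              (m : ℂ) * v₁ + (n : ℂ) * v₂ := by
  rintro ⟨v₁, v₂, c, hli, h⟩
  obtain ⟨hc0, m0, n0, h0⟩ := h 0
  obtain ⟨hc1, m1, n1, h1⟩ := h 1
  obtain ⟨hc2, m2, n2, h2⟩ := h 2
  obtain ⟨hc3, m3, n3, h3⟩ := h 3
  rw [show (3 * (Real.pi : ℂ) * Complex.I * (((0 : Fin 4) : ℕ) : ℂ) / 5)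
      = ((0 : ℝ) : ℂ) * Complex.I from by norm_num] at h0
  rw [show (3 * (Real.pi : ℂ) * Complex.I * (((1 : Fin 4) : ℕ) : ℂ) / 5)
      = ((3 * Real.pi / 5 : ℝ) : ℂ) * Complex.I from by
        rw [show (((1 : Fin 4) : ℕ) : ℂ) = 1 from by norm_num]; push_cast; ring]  at h1
  rw [show (3 * (Real.pi : ℂ) * Complex.I * (((2 : Fin 4) : ℕ) : ℂ) / 5)
      = ((6 * Real.pi / 5 : ℝ) : ℂ) * Complex.I from by
        rw [show (((2 : Fin 4) : ℕ) : ℂ) = 2 from by norm_num]; push_cast; ring]  at h2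
  rw [show (3 * (Real.pi : ℂ) * Complex.I * (((3 : Fin 4) : ℕ) : ℂ) / 5)
      = ((9 * Real.pi / 5 : ℝ) : ℂ) * Complex.I from by
        rw [show (((3 : Fin 4) : ℕ) : ℂ) = 3 from by norm_num [show ((3 : Fin 4) : ℕ) = 3 from rfl]]; push_cast; ring]  at h3
  obtain ⟨hA0, hB0⟩ := kite_coords h0
  obtain ⟨hA1, hB1⟩ := kite_coords h1
  obtain ⟨hA2, hB2⟩ := kite_coords h2
  obtain ⟨hA3, hB3⟩ := kite_coords h3
  set δ : ℝ := v₁.re * v₂.im - v₁.im * v₂.re with hδdef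
  -- linear independence gives δ ≠ 0
  rw [LinearIndependent.pair_iff] at hli
  have hδ : δ ≠ 0 := by
    intro hδ0
    have k1 := hli v₂.im (-v₁.im) (by
      apply Complex.ext <;>
        simp only [Complex.add_re, Complex.add_im, Complex.real_smul, Complex.mul_re,
          Complex.mul_im, Complex.ofReal_re, Complex.ofReal_im, Complex.zero_re,
          Complex.zero_im] <;> nlinarith [hδ0])
    have k2 := hli v₂.re (-v₁.re) (by
      apply Complex.ext <;>
        simp only [Complex.add_re, Complex.add_im, Complex.real_smul, Complex.mul_re,
          Complex.mul_im, Complex.ofReal_re, Complex.ofReal_im, Complex.zero_re,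
          Complex.zero_im] <;> nlinarith [hδ0])
    have hv1 : v₁ = 0 := by
      apply Complex.ext
      · simpa using neg_eq_zero.mp k2.2
      · simpa using neg_eq_zero.mp k1.2
    have := hli 1 0 (by simp [hv1])
    exact one_ne_zero this.1
  set s : ℝ := Real.sin (3 * Real.pi / 5) with hsdef
  set t : ℝ := Real.sin (6 * Real.pi / 5) with htdef
  -- determinant identities
  have E01 := kite_det hA0 hB0 hA1 hB1
  have E23 := kite_det hA2 hB2 hA3 hB3
  have E02 := kite_det hA0 hB0 hA2 hB2
  have E13 := kite_det hA1 hB1 hA3 hB3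
  rw [show 3 * Real.pi / 5 - 0 = 3 * Real.pi / 5 from by ring] at E01
  rw [show 9 * Real.pi / 5 - 6 * Real.pi / 5 = 3 * Real.pi / 5 from by ring] at E23
  rw [show 6 * Real.pi / 5 - 0 = 6 * Real.pi / 5 from by ring] at E02
  rw [show 9 * Real.pi / 5 - 3 * Real.pi / 5 = 6 * Real.pi / 5 from by ring] at E13
  -- trigonometric facts
  have hpi := Real.pi_pos
  have hu : 0 < Real.sin (Real.pi / 5) :=
    Real.sin_pos_of_pos_of_lt_pi (by linarith) (by linarith)
  have hts : t = -Real.sin (Real.pi / 5) := by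
    rw [htdef, show 6 * Real.pi / 5 = Real.pi + Real.pi / 5 from by ring, Real.sin_add]
    simp
  have ht : t ≠ 0 := by rw [hts]; exact neg_ne_zero.mpr (ne_of_gt hu)
  have hss : s = 2 * Real.sin (Real.pi / 5) * Real.cos (Real.pi / 5) := by
    rw [hsdef, show 3 * Real.pi / 5 = Real.pi - 2 * (Real.pi / 5) from by ring,
      Real.sin_pi_sub, Real.sin_two_mul]
  have h5 : Real.sqrt 5 * Real.sqrt 5 = 5 :=
    Real.mul_self_sqrt (by norm_num)
  have ht2 : 2 * s ^ 2 = (3 + Real.sqrt 5) * t ^ 2 := by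
    rw [hss, hts, Real.cos_pi_div_five]
    linear_combination (Real.sin (Real.pi / 5) ^ 2 / 2) * h5
  -- combine
  have h1' : c 0 * c 1 * s * (c 2 * c 3 * s)
      = ((m0 : ℝ) * n1 - (n0 : ℝ) * m1) * δ * (((m2 : ℝ) * n3 - (n2 : ℝ) * m3) * δ) := by
    rw [E01, E23]
  have h2' : c 0 * c 2 * t * (c 1 * c 3 * t)
      = ((m0 : ℝ) * n2 - (n0 : ℝ) * m2) * δ * (((m1 : ℝ) * n3 - (n1 : ℝ) * m3) * δ) := by
    rw [E02, E13]
  set A : ℝ := (m0 : ℝ) * n1 - (n0 : ℝ) * m1 with hA'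
  set B : ℝ := (m2 : ℝ) * n3 - (n2 : ℝ) * m3 with hB'
  set D : ℝ := (m0 : ℝ) * n2 - (n0 : ℝ) * m2 with hD'
  set E : ℝ := (m1 : ℝ) * n3 - (n1 : ℝ) * m3 with hE'
  have hcan : (A * B * t ^ 2) * δ ^ 2 = (D * E * s ^ 2) * δ ^ 2 := by
    linear_combination (-t ^ 2) * h1' + s ^ 2 * h2'
  have key : A * B * t ^ 2 = D * E * s ^ 2 :=
    mul_right_cancel₀ (pow_ne_zero 2 hδ) hcan
  have hD : D ≠ 0 := by
    intro hD0
    have : c 0 * c 2 * t = 0 := by rw [E02, hD0, zero_mul]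
    exact ht (by
      rcases mul_eq_zero.mp this with h' | h'
      · rcases mul_eq_zero.mp h' with h'' | h''
        · exact absurd h'' hc0
        · exact absurd h'' hc2
      · exact h')
  have hE : E ≠ 0 := by
    intro hE0
    have : c 1 * c 3 * t = 0 := by rw [E13, hE0, zero_mul]
    exact ht (by
      rcases mul_eq_zero.mp this with h' | h'
      · rcases mul_eq_zero.mp h' with h'' | h''
        · exact absurd h'' hc1
        · exact absurd h'' hc3
      · exact h')
  have hfin : 2 * (A * B) * t ^ 2 = D * E * (3 + Real.sqrt 5) * t ^ 2 := by
    linear_combination 2 * key + (D * E) * ht2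
  have hfin2 : 2 * (A * B) = D * E * (3 + Real.sqrt 5) :=
    mul_right_cancel₀ (pow_ne_zero 2 ht) hfin
  -- irrationality of √5 gives the contradiction
  have hirr : Irrational (Real.sqrt 5) := by
    have : Irrational (Real.sqrt (5 : ℕ)) := (by norm_num : Nat.Prime 5).irrational_sqrt
    simpa using this
  obtain ⟨a, ha⟩ : ∃ a : ℤ, A = (a : ℝ) := ⟨m0 * n1 - n0 * m1, by rw [hA']; push_cast; ring⟩
  obtain ⟨b, hb⟩ : ∃ b : ℤ, B = (b : ℝ) := ⟨m2 * n3 - n2 * m3, by rw [hB']; push_cast; ring⟩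
  obtain ⟨d, hd⟩ : ∃ d : ℤ, D = (d : ℝ) := ⟨m0 * n2 - n0 * m2, by rw [hD']; push_cast; ring⟩
  obtain ⟨e, he⟩ : ∃ e : ℤ, E = (e : ℝ) := ⟨m1 * n3 - n1 * m3, by rw [hE']; push_cast; ring⟩
  rw [ha, hb, hd, he] at hfin2
  have hde : (d : ℝ) * (e : ℝ) ≠ 0 := by
    rw [← hd, ← he]; exact mul_ne_zero hD hE
  have hdeQ : (((d * e : ℤ) : ℚ) : ℝ) ≠ 0 := by push_cast; exact hde
  apply hirr
  refine ⟨((2 * a * b - 3 * d * e : ℤ) : ℚ) / ((d * e : ℤ) : ℚ), ?_⟩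
  have hcast : ((((2 * a * b - 3 * d * e : ℤ) : ℚ) / ((d * e : ℤ) : ℚ) : ℚ) : ℝ)
      = (((2 * a * b - 3 * d * e : ℤ) : ℚ) : ℝ) / (((d * e : ℤ) : ℚ) : ℝ) := by
    push_cast; ring
  rw [hcast, div_eq_iff hdeQ]
  push_cast
  linear_combination hfin2
end
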